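/- arXiv:1101.5041 — 8 statements merged into one kernel-verified Lean document; each statement's English description precedes it below -/
import Mathlib

section
/- Let J be the 2n×2n real matrix with block form [[0, -I],[I, 0]]. For every L in the real symplectic group Sp(2n,ℝ) = {L : Lᵀ J L = J}, the matrix LᵀL - iJ (viewed as a complex Hermitian matrix) is positive semidefinite; consequently ½LᵀL belongs to K_n = {S real symmetric of order 2n : 2S - iJ ≥ 0}. -/
open Matrix
open scoped ComplexOrder

noncomputable section

/-- The standard symplectic form matrix J = [[0, -I],[I, 0]] of order 2n. -/
def sympJ (n : ℕ) : Matrix (Fin n ⊕ Fin n) (Fin n ⊕ Fin n) ℝ :=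
  Matrix.fromBlocks 0 (-1) 1 0

/-- A real 2n×2n matrix L is symplectic if Lᵀ J L = J. -/
def IsSymplectic {n : ℕ} (L : Matrix (Fin n ⊕ Fin n) (Fin n ⊕ Fin n) ℝ) : Prop :=
  Lᵀ * sympJ n * L = sympJ n

/-- The convex set K_n of Gaussian covariance matrices:
real symmetric S of order 2n with 2S - iJ positive semidefinite (as a complex matrix). -/
def Kset (n : ℕ) : Set (Matrix (Fin n ⊕ Fin n) (Fin n ⊕ Fin n) ℝ) :=
  {S | S.IsSymm ∧
    ((2 : ℂ) • S.map (Complex.ofReal) - Complex.I • (sympJ n).map (Complex.ofReal)).PosSemidef}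

/-!
Because `J` is skew-symmetric with `J² = -1`, the matrix `1 - iJ` is Hermitian with
`(1 - iJ)² = 2(1 - iJ)`, so `1 - iJ = ½ (1 - iJ)ᴴ (1 - iJ)` is positive semidefinite.
For symplectic `L` the relation `LᵀJL = J` gives `LᵀL - iJ = Lᴴ (1 - iJ) L`, a congruence
of a positive semidefinite matrix.
-/

namespace Matrix

variable {m : Type*}

lemma conjTranspose_map_ofReal (M : Matrix m m ℝ) :
    (M.map Complex.ofReal)ᴴ = Mᵀ.map Complex.ofReal := by
  rw [← conjTranspose_map _ fun r => (Complex.conj_ofReal r).symm,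
    conjTranspose_eq_transpose_of_trivial]

variable [Fintype m]

lemma map_ofReal_mul (M N : Matrix m m ℝ) :
    (M * N).map Complex.ofReal = M.map Complex.ofReal * N.map Complex.ofReal :=
  Matrix.map_mul (f := Complex.ofRealHom)

variable [DecidableEq m]

lemma posSemidef_one_sub_I_smul_map_ofReal {J : Matrix m m ℝ} (hJskew : Jᵀ = -J)
    (hJsq : J * J = -1) : (1 - Complex.I • J.map Complex.ofReal).PosSemidef := by
  set A := 1 - Complex.I • J.map Complex.ofReal
  have hA_herm : Aᴴ = A := by
    simp [A, conjTranspose_map_ofReal, hJskew, Matrix.map_neg]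
  have hA_sq : Aᴴ * A = (2 : ℝ) • A := by
    have hIJ_sq :
        (Complex.I • J.map Complex.ofReal) * (Complex.I • J.map Complex.ofReal) = 1 := by
      rw [smul_mul_smul_comm, ← map_ofReal_mul, hJsq, Complex.I_mul_I]
      simp [Matrix.map_neg, Matrix.map_one]
    rw [hA_herm]
    simp only [A, sub_mul, mul_sub, hIJ_sq, one_mul, mul_one]
    rw [two_smul]
    abel
  have hA_eq : A = (1 / 2 : ℝ) • (Aᴴ * A) := by
    rw [hA_sq, smul_smul]; norm_num
  rw [hA_eq]
  exact (posSemidef_conjTranspose_mul_self A).smul (by norm_num)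

lemma posSemidef_transpose_mul_self_sub_I_smul {J L : Matrix m m ℝ} (hJskew : Jᵀ = -J)
    (hJsq : J * J = -1) (hL : Lᵀ * J * L = J) :
    ((Lᵀ * L).map Complex.ofReal - Complex.I • J.map Complex.ofReal).PosSemidef := by
  have hconj :
      (L.map Complex.ofReal)ᴴ * (1 - Complex.I • J.map Complex.ofReal) * L.map Complex.ofReal
        = (Lᵀ * L).map Complex.ofReal - Complex.I • J.map Complex.ofReal := by
    rw [conjTranspose_map_ofReal, Matrix.mul_sub, Matrix.sub_mul, Matrix.mul_one,
      Matrix.mul_smul, Matrix.smul_mul, ← map_ofReal_mul, ← map_ofReal_mul, ← map_ofReal_mul,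
      hL]
  exact hconj ▸ (posSemidef_one_sub_I_smul_map_ofReal hJskew hJsq).conjTranspose_mul_mul_same _

end Matrix

lemma sympJ_transpose (n : ℕ) : (sympJ n)ᵀ = -sympJ n := by
  simp [sympJ, fromBlocks_transpose, fromBlocks_neg]

lemma sympJ_mul_self (n : ℕ) : sympJ n * sympJ n = -1 := by
  simp [sympJ, fromBlocks_multiply, ← fromBlocks_one, fromBlocks_neg]

theorem symplectic_half_LtL_mem_Kset (n : ℕ)
    (L : Matrix (Fin n ⊕ Fin n) (Fin n ⊕ Fin n) ℝ) (hL : IsSymplectic L) :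
    ((Lᵀ * L).map (Complex.ofReal) - Complex.I • (sympJ n).map (Complex.ofReal)).PosSemidef ∧
    (1 / 2 : ℝ) • (Lᵀ * L) ∈ Kset n := by
  have hpsd := posSemidef_transpose_mul_self_sub_I_smul (sympJ_transpose n) (sympJ_mul_self n) hL
  refine ⟨hpsd, (isSymm_transpose_mul_self L).smul _, ?_⟩
  have htwo_half : (2 : ℂ) • ((1 / 2 : ℝ) • (Lᵀ * L)).map Complex.ofReal
      = (Lᵀ * L).map Complex.ofReal := by
    ext i j
    simp
  rwa [htwo_half]
end
end

section
/- If S ∈ K_n (i.e. S is real symmetric of order 2n with 2S - iJ ≥ 0), then S is strictly positive definite and det S ≥ 4^{-n}. -/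
open Matrix
open scoped ComplexOrder

noncomputable section

/-!
Write `A = M - iJ` with `M`, `J` real. Hermiticity of `A` makes `M` symmetric and `J`
antisymmetric, so `Aᵀ = M + iJ` is positive semidefinite too. On a real vector `x`,
`x* A x = xᵀMx - i xᵀJx`; hence `M ⪰ 0`, and a real null vector of `M` is a null vector of `A`,
so it lies in `ker J`: `M` is positive definite as soon as `J` is invertible. Writing `M = BᵀB`
and conjugating by `B⁻¹` reduces to `M = 1`, where `H = i B⁻ᵀJB⁻¹` satisfies `-1 ≤ H ≤ 1`,
so `|det H| ≤ 1`, i.e. `|det J| ≤ det M`. With `M = 2S` and `|det J| = 1` this is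
`4ⁿ det S ≥ 1`.
-/

open Complex
open scoped MatrixOrder

namespace Matrix

variable {ι : Type*}

lemma norm_det_le_one_of_neg_one_le_of_le_one [Fintype ι] [DecidableEq ι] {H : Matrix ι ι ℂ}
    (h1 : -1 ≤ H) (h2 : H ≤ 1) : ‖H.det‖ ≤ 1 := by
  have hH : H.IsHermitian := by simpa using isHermitian_one.sub h2.isHermitian
  have hH' : IsSelfAdjoint H := hH
  have h1' : algebraMap ℝ _ (-1) ≤ H := by simpa using h1
  rw [hH.det_eq_prod_eigenvalues, norm_prod]
  refine Finset.prod_le_one (fun _ _ ↦ norm_nonneg _) fun i _ ↦ ?_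
  have hmem := hH.eigenvalues_mem_spectrum_real i
  rw [RCLike.norm_ofReal, abs_le]
  exact ⟨(algebraMap_le_iff_le_spectrum (a := H)).1 h1' _ hmem, (CFC.le_one_iff H).1 h2 _ hmem⟩

variable {M J : Matrix ι ι ℝ}

lemma isSymm_of_isHermitian_sub_I_smul
    (h : (M.map ofReal - I • J.map ofReal).IsHermitian) : M.IsSymm := by
  ext i j
  simpa using congr_arg re (congr_fun₂ h i j)

lemma transpose_eq_neg_of_isHermitian_sub_I_smul
    (h : (M.map ofReal - I • J.map ofReal).IsHermitian) : Jᵀ = -J := by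
  ext i j
  simpa using congr_arg im (congr_fun₂ h i j)

lemma posSemidef_add_I_smul_of_posSemidef_sub_I_smul
    (h : (M.map ofReal - I • J.map ofReal).PosSemidef) :
    (M.map ofReal + I • J.map ofReal).PosSemidef := by
  have hM := isSymm_of_isHermitian_sub_I_smul h.1
  have hJ := transpose_eq_neg_of_isHermitian_sub_I_smul h.1
  have hT : (M.map ofReal - I • J.map ofReal)ᵀ = M.map ofReal + I • J.map ofReal := by
    rw [transpose_sub, transpose_smul, ← transpose_map, ← transpose_map, hM.eq, hJ]
    ext i j
    simp [sub_eq_add_neg]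
  exact hT ▸ h.transpose

variable [Fintype ι]

lemma map_ofReal_mul_s2 {m o : Type*} (A : Matrix m ι ℝ) (B : Matrix ι o ℝ) :
    (A * B).map ofReal = A.map ofReal * B.map ofReal :=
  Matrix.map_mul (f := ofRealHom)

lemma sub_I_smul_mulVec_ofReal (x : ι → ℝ) :
    (M.map ofReal - I • J.map ofReal) *ᵥ (ofReal ∘ x) =
      ofReal ∘ (M *ᵥ x) - I • ofReal ∘ (J *ᵥ x) := by
  ext i
  simp [mulVec, dotProduct, Finset.mul_sum, sub_mul, mul_assoc]

lemma dotProduct_sub_I_smul_mulVec_ofReal (x : ι → ℝ) :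
    star (ofReal ∘ x) ⬝ᵥ (M.map ofReal - I • J.map ofReal) *ᵥ (ofReal ∘ x) =
      ⟨x ⬝ᵥ M *ᵥ x, -(x ⬝ᵥ J *ᵥ x)⟩ := by
  rw [sub_I_smul_mulVec_ofReal]
  apply Complex.ext <;> simp [dotProduct]

lemma posDef_of_posSemidef_sub_I_smul [DecidableEq ι] (hJ : J.det ≠ 0)
    (h : (M.map ofReal - I • J.map ofReal).PosSemidef) : M.PosDef := by
  refine .of_dotProduct_mulVec_pos
    (isHermitian_iff_isSymm.2 (isSymm_of_isHermitian_sub_I_smul h.1)) fun x hx ↦ ?_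
  have hq := h.dotProduct_mulVec_nonneg (ofReal ∘ x)
  rw [dotProduct_sub_I_smul_mulVec_ofReal] at hq
  obtain ⟨hMx, hJx⟩ := nonneg_iff.1 hq
  rw [star_trivial]
  refine hMx.lt_of_ne fun h0 ↦ hx ?_
  have hAx := (h.dotProduct_mulVec_zero_iff (ofReal ∘ x)).1
    (by rw [dotProduct_sub_I_smul_mulVec_ofReal]; exact Complex.ext h0.symm hJx.symm)
  rw [sub_I_smul_mulVec_ofReal] at hAx
  refine eq_zero_of_mulVec_eq_zero hJ (funext fun i ↦ ?_)
  simpa using congr_arg im (congr_fun hAx i)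

lemma PosSemidef.transpose_mul_mul_same_sub_I_smul {κ : Type*} [Fintype κ]
    (h : (M.map ofReal - I • J.map ofReal).PosSemidef) (R : Matrix ι κ ℝ) :
    ((Rᵀ * M * R).map ofReal - I • (Rᵀ * J * R).map ofReal).PosSemidef := by
  have hR : (R.map ofReal)ᴴ = Rᵀ.map ofReal := by ext; simp
  convert h.conjTranspose_mul_mul_same (R.map ofReal) using 1
  simp only [hR, Matrix.mul_sub, Matrix.sub_mul, Matrix.mul_smul, Matrix.smul_mul,
    map_ofReal_mul_s2]

lemma abs_det_le_one_of_posSemidef_one_sub_I_smul [DecidableEq ι] {K : Matrix ι ι ℝ}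
    (h : ((1 : Matrix ι ι ℝ).map ofReal - I • K.map ofReal).PosSemidef) : |K.det| ≤ 1 := by
  have h' := posSemidef_add_I_smul_of_posSemidef_sub_I_smul h
  rw [Matrix.map_one _ ofReal_zero ofReal_one] at h h'
  have hdet : ‖(I • K.map ofReal).det‖ = |K.det| := by
    rw [det_smul, norm_mul, norm_pow, norm_I, one_pow, one_mul]
    exact (congr_arg norm (ofRealHom.map_det K)).symm.trans (norm_real _)
  rw [← hdet]
  exact norm_det_le_one_of_neg_one_le_of_le_one (by simpa [le_iff, add_comm] using h') h

lemma abs_det_le_det_of_posSemidef_sub_I_smul [DecidableEq ι] (hM : M.PosDef)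
    (h : (M.map ofReal - I • J.map ofReal).PosSemidef) : |J.det| ≤ M.det := by
  obtain ⟨B, hB, rfl⟩ :=
    CStarAlgebra.isStrictlyPositive_iff_eq_star_mul_self.mp hM.isStrictlyPositive
  set R := B⁻¹
  have hBR : B * R = 1 := mul_nonsing_inv B ((isUnit_iff_isUnit_det B).1 hB)
  rw [star_eq_conjTranspose, conjTranspose_eq_transpose_of_trivial] at h ⊢
  have hRMR : Rᵀ * (Bᵀ * B) * R = 1 := by
    calc Rᵀ * (Bᵀ * B) * R = (B * R)ᵀ * (B * R) := by
          rw [transpose_mul, Matrix.mul_assoc, Matrix.mul_assoc, Matrix.mul_assoc]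
      _ = 1 := by rw [hBR, transpose_one, Matrix.mul_one]
  have hK := abs_det_le_one_of_posSemidef_one_sub_I_smul
    (hRMR ▸ h.transpose_mul_mul_same_sub_I_smul R)
  have hdet : B.det * R.det = 1 := by rw [← det_mul, hBR, det_one]
  rw [det_mul, det_mul, det_transpose, abs_mul, abs_mul, mul_right_comm, abs_mul_abs_self] at hK
  rw [det_mul, det_transpose]
  calc |J.det| = B.det * B.det * (R.det * R.det * |J.det|) := by
        linear_combination (-B.det * R.det - 1) * |J.det| * hdet
    _ ≤ B.det * B.det := mul_le_of_le_one_right (mul_self_nonneg _) hK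

end Matrix

lemma sympJ_mul_transpose (n : ℕ) : sympJ n * (sympJ n)ᵀ = 1 := by
  simp [sympJ, fromBlocks_transpose, fromBlocks_multiply, ← fromBlocks_one]

lemma abs_det_sympJ (n : ℕ) : |(sympJ n).det| = 1 := by
  have h := congr_arg det (sympJ_mul_transpose n)
  rw [det_mul, det_transpose, det_one] at h
  rcases mul_self_eq_one_iff.1 h with h | h <;> simp [h]

theorem Kset_posDef_and_det_ge (n : ℕ)
    (S : Matrix (Fin n ⊕ Fin n) (Fin n ⊕ Fin n) ℝ) (hS : S ∈ Kset n) :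
    S.PosDef ∧ ((4 : ℝ) ^ n)⁻¹ ≤ S.det := by
  have h2S : (((2 : ℝ) • S).map ofReal - I • (sympJ n).map ofReal).PosSemidef := by
    have h2 : ((2 : ℝ) • S).map ofReal = (2 : ℂ) • S.map ofReal := by ext; simp
    exact h2 ▸ hS.2
  have hJ : (sympJ n).det ≠ 0 := abs_pos.1 (by rw [abs_det_sympJ]; exact one_pos)
  have hPD := posDef_of_posSemidef_sub_I_smul hJ h2S
  have hdet := abs_det_le_det_of_posSemidef_sub_I_smul hPD h2S
  rw [abs_det_sympJ, det_smul, Fintype.card_sum, Fintype.card_fin, ← two_mul, pow_mul] at hdet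
  refine ⟨by simpa using hPD.smul (inv_pos.2 (two_pos (α := ℝ))), ?_⟩
  rw [inv_le_iff_one_le_mul₀' (by positivity)]
  norm_num at hdet
  exact hdet
end
end

section
/- Uniqueness of symplectic eigenvalues: if D = diag(d₁,...,d_n) with d₁ ≥ ... ≥ d_n > 0 and D' = diag(d₁',...,d_n') with d₁' ≥ ... ≥ d_n' > 0, and there exist M, M' ∈ Sp(2n,ℝ) with Mᵀ[[D,0],[0,D]]M = M'ᵀ[[D',0],[0,D']]M', then D = D'. -/
open Matrix
open scoped ComplexOrder

noncomputable section

/-!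
For a symplectic `M` we also have `M J Mᵀ = J`, so moving `M` cyclically through
`Jᵀ (Mᵀ S M) J (Mᵀ S M)` shows that the characteristic polynomial of `Jᵀ S J S` does not
change when `S` is replaced by `Mᵀ S M`. For `S = diag(D, D)` conjugation by `J` only swaps
the two blocks, so `Jᵀ S J S = S²`, whose eigenvalues are the `dₖ²`, each twice. Hence both
sides have the same multiset of squares, and two decreasing positive sequences with the same
squares agree.
-/

open Polynomial Finset

theorem Antitone.eq_of_map_univ_val_eq {α : Type*} [PartialOrder α] {n : ℕ} {f g : Fin n → α}
    (hf : Antitone f) (hg : Antitone g) (h : univ.val.map f = univ.val.map g) : f = g := by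
  rw [Fin.univ_val_map, Fin.univ_val_map, Multiset.coe_eq_coe] at h
  exact List.ofFn_injective (h.eq_of_sortedGE hf.sortedGE_ofFn hg.sortedGE_ofFn)

theorem Matrix.roots_charpoly_diagonal {R m : Type*} [CommRing R] [IsDomain R] [Fintype m]
    [DecidableEq m] (v : m → R) : (diagonal v).charpoly.roots = univ.val.map v := by
  rw [charpoly_diagonal, prod_eq_multiset_prod,
    show (fun i => X - C (v i)) = (fun a => X - C a) ∘ v from rfl, ← Multiset.map_map,
    roots_multiset_prod_X_sub_C]

theorem Matrix.J_transpose_mul_fromBlocks_mul_J {l R : Type*} [DecidableEq l] [Fintype l]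
    [CommRing R] (A B : Matrix l l R) :
    (J l R)ᵀ * fromBlocks A 0 0 B * J l R = fromBlocks B 0 0 A := by
  rw [J_transpose]
  simp [J, fromBlocks_multiply, fromBlocks_neg]

theorem sympJ_eq_J (n : ℕ) : sympJ n = J (Fin n) ℝ := rfl

theorem IsSymplectic.mul_sympJ_mul_transpose {n : ℕ}
    {M : Matrix (Fin n ⊕ Fin n) (Fin n ⊕ Fin n) ℝ}
    (hM : IsSymplectic M) : M * sympJ n * Mᵀ = sympJ n :=
  SymplecticGroup.mem_iff.mp (SymplecticGroup.mem_iff'.mpr hM)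

theorem IsSymplectic.charpoly_congruence_invariant {n : ℕ}
    {M : Matrix (Fin n ⊕ Fin n) (Fin n ⊕ Fin n) ℝ}
    (hM : IsSymplectic M) (S : Matrix (Fin n ⊕ Fin n) (Fin n ⊕ Fin n) ℝ) :
    ((sympJ n)ᵀ * (Mᵀ * S * M) * sympJ n * (Mᵀ * S * M)).charpoly =
      ((sympJ n)ᵀ * S * sympJ n * S).charpoly := by
  have hMJ := hM.mul_sympJ_mul_transpose
  have hMJt : M * (sympJ n)ᵀ * Mᵀ = (sympJ n)ᵀ := by
    simpa [Matrix.transpose_mul, Matrix.mul_assoc] using congrArg transpose hMJ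
  calc ((sympJ n)ᵀ * (Mᵀ * S * M) * sympJ n * (Mᵀ * S * M)).charpoly
      = (((sympJ n)ᵀ * Mᵀ * S * (M * sympJ n * Mᵀ) * S) * M).charpoly := by
        simp only [Matrix.mul_assoc]
    _ = (((sympJ n)ᵀ * Mᵀ * S * sympJ n * S) * M).charpoly := by rw [hMJ]
    _ = (M * ((sympJ n)ᵀ * Mᵀ * S * sympJ n * S)).charpoly := charpoly_mul_comm _ _
    _ = ((M * (sympJ n)ᵀ * Mᵀ) * S * sympJ n * S).charpoly := by simp only [Matrix.mul_assoc]
    _ = ((sympJ n)ᵀ * S * sympJ n * S).charpoly := by rw [hMJt]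

theorem Matrix.roots_charpoly_J_transpose_mul_fromBlocks_diagonal {l R : Type*} [DecidableEq l]
    [Fintype l] [CommRing R] [IsDomain R] (d : l → R) :
    ((J l R)ᵀ * fromBlocks (diagonal d) 0 0 (diagonal d) * J l R *
      fromBlocks (diagonal d) 0 0 (diagonal d)).charpoly.roots =
      2 • univ.val.map (fun i => d i ^ 2) := by
  rw [J_transpose_mul_fromBlocks_mul_J, fromBlocks_diagonal, diagonal_mul_diagonal,
    roots_charpoly_diagonal, ← univ_disjSum_univ, val_disjSum, Multiset.map_disjSum,
    two_nsmul]
  simp only [Sum.elim_inl, Sum.elim_inr, sq]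

theorem williamson_uniqueness (n : ℕ)
    (d d' : Fin n → ℝ)
    (hd : ∀ i j : Fin n, i ≤ j → d j ≤ d i) (hd0 : ∀ i, 0 < d i)
    (hd' : ∀ i j : Fin n, i ≤ j → d' j ≤ d' i) (hd'0 : ∀ i, 0 < d' i)
    (M M' : Matrix (Fin n ⊕ Fin n) (Fin n ⊕ Fin n) ℝ)
    (hM : IsSymplectic M) (hM' : IsSymplectic M')
    (h : Mᵀ * Matrix.fromBlocks (Matrix.diagonal d) 0 0 (Matrix.diagonal d) * M =
      M'ᵀ * Matrix.fromBlocks (Matrix.diagonal d') 0 0 (Matrix.diagonal d') * M') :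
    d = d' := by
  have hcharpoly := calc
    _ = _ := (hM.charpoly_congruence_invariant (fromBlocks (diagonal d) 0 0 (diagonal d))).symm
    _ = _ := by rw [h]
    _ = _ := hM'.charpoly_congruence_invariant _
  have hsq : univ.val.map (fun i => d i ^ 2) = univ.val.map (fun i => d' i ^ 2) := by
    apply nsmul_right_injective two_ne_zero
    simpa only [sympJ_eq_J, roots_charpoly_J_transpose_mul_fromBlocks_diagonal] using
      congrArg roots hcharpoly
  have hsq_eq := Antitone.eq_of_map_univ_val_eq
    (fun i j hij => pow_le_pow_left₀ (hd0 j).le (hd i j hij) 2)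
    (fun i j hij => pow_le_pow_left₀ (hd'0 j).le (hd' i j hij) 2) hsq
  funext i
  exact (pow_left_inj₀ (hd0 i).le (hd'0 i).le two_ne_zero).mp (congrFun hsq_eq i)
end
end

section
/- Let D be an n×n real diagonal matrix with D ≥ I (all diagonal entries at least 1). Then there exist positive diagonal matrices D₁, D₂ of order n such that D = ½(D₁ + D₂) and D = ½(D₁⁻¹ + D₂⁻¹). -/
/-!
Every `x ≥ 1` is `(a + a⁻¹) / 2` for `a = x + √(x² - 1) > 0`. Taking `D₁ = diag a` entrywise and
`D₂ = D₁⁻¹`, the two required identities coincide: both say `D = ½ (D₁ + D₁⁻¹)`.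
-/

open Matrix
open scoped ComplexOrder

noncomputable section

theorem Real.exists_pos_add_inv_eq_two_mul {x : ℝ} (hx : 1 ≤ x) :
    ∃ a : ℝ, 0 < a ∧ a + a⁻¹ = 2 * x := by
  set s := √(x ^ 2 - 1)
  have hs : s ^ 2 = x ^ 2 - 1 := Real.sq_sqrt (by nlinarith)
  have hinv : (x + s)⁻¹ = x - s := inv_eq_of_mul_eq_one_right (by linear_combination -hs)
  exact ⟨x + s, by positivity, by rw [hinv]; ring⟩

theorem Matrix.inv_diagonal_of_ne_zero {n K : Type*} [Fintype n] [DecidableEq n] [Field K]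
    {v : n → K} (hv : ∀ i, v i ≠ 0) : (diagonal v)⁻¹ = diagonal v⁻¹ :=
  inv_eq_left_inv <| by
    rw [diagonal_mul_diagonal, ← diagonal_one]
    exact congrArg diagonal (funext fun i => inv_mul_cancel₀ (hv i))

theorem diagonal_splitting (n : ℕ) (d : Fin n → ℝ) (hd : ∀ i, 1 ≤ d i) :
    ∃ d₁ d₂ : Fin n → ℝ, (∀ i, 0 < d₁ i) ∧ (∀ i, 0 < d₂ i) ∧
      Matrix.diagonal d =
        (1 / 2 : ℝ) • (Matrix.diagonal d₁ + Matrix.diagonal d₂) ∧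
      Matrix.diagonal d =
        (1 / 2 : ℝ) • ((Matrix.diagonal d₁)⁻¹ + (Matrix.diagonal d₂)⁻¹) := by
  choose a ha_pos ha_sum using fun i => Real.exists_pos_add_inv_eq_two_mul (hd i)
  have ha_ne : ∀ i, a i ≠ 0 := fun i => (ha_pos i).ne'
  have hsplit : diagonal d = (1 / 2 : ℝ) • (diagonal a + diagonal a⁻¹) := by
    rw [diagonal_add, ← diagonal_smul]
    congr 1
    funext i
    simp only [Pi.smul_apply, Pi.inv_apply, ha_sum, smul_eq_mul]
    ring
  refine ⟨a, a⁻¹, ha_pos, fun i => inv_pos.2 (ha_pos i), hsplit, ?_⟩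
  rw [inv_diagonal_of_ne_zero ha_ne,
    inv_diagonal_of_ne_zero (v := a⁻¹) fun i => inv_ne_zero (ha_ne i), inv_inv, add_comm]
  exact hsplit
end
end

section
/- For real numbers d ≥ 1, setting x = 1 + 2(d²-1) + 2d√(d²-1), d₁ = 2d/(1+x), and d₂ = d₁x, one has d₁ > 0, d₂ > 0, d = ½(d₁+d₂), and d = ½(d₁⁻¹ + d₂⁻¹). -/
/-! With `t = d + √(d² - 1)` one has `x = t²`, and `t` is a root of `t² - 2dt + 1`, i.e.
`t² + 1 = 2dt`. Hence `d₁ = 2d / (1 + t²) = t⁻¹` and `d₂ = t⁻¹ t² = t`: the two numbers are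
reciprocal to each other, so `t + t⁻¹ = 2d` gives both mean identities. -/

namespace Real

lemma add_sqrt_sq_sub_one_sq {d : ℝ} (hd : 1 ≤ d ^ 2) :
    (d + √(d ^ 2 - 1)) ^ 2 = 1 + 2 * (d ^ 2 - 1) + 2 * d * √(d ^ 2 - 1) := by
  linear_combination sq_sqrt (sub_nonneg.2 hd)

lemma add_sqrt_sq_sub_one_sq_add_one {d : ℝ} (hd : 1 ≤ d ^ 2) :
    (d + √(d ^ 2 - 1)) ^ 2 + 1 = 2 * d * (d + √(d ^ 2 - 1)) := by
  linear_combination sq_sqrt (sub_nonneg.2 hd)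

end Real

section Reciprocal

variable {K : Type*} [Field K] {t d : K}

lemma two_mul_div_one_add_sq_eq_inv [LinearOrder K] [IsStrictOrderedRing K]
    (h : t ^ 2 + 1 = 2 * d * t) : 2 * d / (1 + t ^ 2) = t⁻¹ := by
  have h2d : 2 * d ≠ 0 := left_ne_zero_of_mul (h ▸ by positivity : 2 * d * t ≠ 0)
  rw [add_comm, h, div_mul_cancel_left₀ h2d]

lemma inv_add_self_eq_two_mul (ht : t ≠ 0) (h : t ^ 2 + 1 = 2 * d * t) : t⁻¹ + t = 2 * d := by
  field_simp
  linear_combination h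

end Reciprocal

theorem scalar_splitting (d x d₁ d₂ : ℝ) (hd : 1 ≤ d)
    (hx : x = 1 + 2 * (d ^ 2 - 1) + 2 * d * Real.sqrt (d ^ 2 - 1))
    (h1 : d₁ = 2 * d / (1 + x)) (h2 : d₂ = d₁ * x) :
    0 < d₁ ∧ 0 < d₂ ∧ d = (d₁ + d₂) / 2 ∧ d = (d₁⁻¹ + d₂⁻¹) / 2 := by
  set t := d + √(d ^ 2 - 1)
  have hd2 : 1 ≤ d ^ 2 := one_le_pow₀ hd
  have ht : 0 < t := add_pos_of_pos_of_nonneg (by linarith) (Real.sqrt_nonneg _)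
  have hquad : t ^ 2 + 1 = 2 * d * t := Real.add_sqrt_sq_sub_one_sq_add_one hd2
  have hxt : x = t ^ 2 := hx.trans (Real.add_sqrt_sq_sub_one_sq hd2).symm
  have hd₁ : d₁ = t⁻¹ := by rw [h1, hxt, two_mul_div_one_add_sq_eq_inv hquad]
  have hd₂ : d₂ = t := by rw [h2, hd₁, hxt]; field_simp
  have hmean : t⁻¹ + t = 2 * d := inv_add_self_eq_two_mul ht.ne' hquad
  subst hd₁ hd₂
  exact ⟨inv_pos.2 ht, ht, by linarith, by rw [inv_inv]; linarith⟩
end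

section
/- If M₁, M₂, M₃, M₄ are real positive definite symplectic matrices of order 2n with ¼(M₁ + M₂ + M₃ + M₄) = I, then M₁ = M₂ = M₃ = M₄ = I. -/
open Matrix
open scoped ComplexOrder

noncomputable section

/-! For a symmetric symplectic `M` one has `M⁻¹ = -J M J`, so the inverses of the `Mᵢ` also average
to `-J I J = I`. Hence the positive semidefinite matrices `Mᵢ + Mᵢ⁻¹ - 2 = (Mᵢ - 1) Mᵢ⁻¹ (Mᵢ - 1)`
sum to zero, so each vanishes; and `M + M⁻¹ = 2` gives `(M - 1)² = 0`, i.e. `M = 1`. -/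

open scoped MatrixOrder
open Finset

namespace Matrix

variable {𝕜 m : Type*} [RCLike 𝕜] [Fintype m] [DecidableEq m] {M : Matrix m m 𝕜}

theorem PosDef.posSemidef_add_inv_sub_two (hM : M.PosDef) : (M + M⁻¹ - 2).PosSemidef := by
  have hdet : IsUnit M.det := (isUnit_iff_isUnit_det M).mp hM.isUnit
  have hfactor : (M - 1)ᴴ * M⁻¹ * (M - 1) = M + M⁻¹ - 2 := by
    rw [conjTranspose_sub, hM.isHermitian.eq, conjTranspose_one, ← one_add_one_eq_two]
    simp only [sub_mul, mul_sub, one_mul, mul_one, mul_nonsing_inv _ hdet, nonsing_inv_mul _ hdet]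
    abel
  rw [← hfactor]
  exact hM.inv.posSemidef.conjTranspose_mul_mul_same _

theorem PosDef.eq_one_of_add_inv_eq_two (hM : M.PosDef) (h : M + M⁻¹ = 2) : M = 1 := by
  have hdet : IsUnit M.det := (isUnit_iff_isUnit_det M).mp hM.isUnit
  have hsq : (M - 1)ᴴ * (M - 1) = 0 := by
    rw [conjTranspose_sub, hM.isHermitian.eq, conjTranspose_one]
    calc (M - 1) * (M - 1) = M * (M + M⁻¹) - M * 2 := by
          rw [mul_add, mul_nonsing_inv M hdet, ← one_add_one_eq_two]; noncomm_ring
      _ = 0 := by rw [h, sub_self]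
  rw [← sub_eq_zero]
  exact conjTranspose_mul_self_eq_zero.mp hsq

end Matrix

namespace SymplecticGroup

variable {ι l : Type*} [Fintype l] [DecidableEq l]

theorem inv_eq_of_isSymm {M : Matrix (l ⊕ l) (l ⊕ l) ℝ} (hM : M ∈ symplecticGroup l ℝ)
    (hMs : M.IsSymm) : M⁻¹ = -(J l ℝ * M * J l ℝ) := by
  rw [inv_eq_symplectic_inv M hM, hMs.eq, Matrix.neg_mul, Matrix.neg_mul]

theorem sum_inv_eq_card_smul_one {s : Finset ι} {M : ι → Matrix (l ⊕ l) (l ⊕ l) ℝ}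
    (hM : ∀ i ∈ s, M i ∈ symplecticGroup l ℝ) (hMs : ∀ i ∈ s, (M i).IsSymm)
    (hsum : ∑ i ∈ s, M i = #s • 1) : ∑ i ∈ s, (M i)⁻¹ = #s • 1 := by
  calc ∑ i ∈ s, (M i)⁻¹ = -(J l ℝ * (∑ i ∈ s, M i) * J l ℝ) := by
        rw [Finset.mul_sum, Finset.sum_mul, ← Finset.sum_neg_distrib]
        exact Finset.sum_congr rfl fun i hi => inv_eq_of_isSymm (hM i hi) (hMs i hi)
    _ = #s • 1 := by
        rw [hsum, Matrix.mul_smul, mul_one, Matrix.smul_mul, J_squared, smul_neg, neg_neg]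

theorem eq_one_of_posDef_of_sum_eq_card_smul_one {s : Finset ι}
    {M : ι → Matrix (l ⊕ l) (l ⊕ l) ℝ} (hM : ∀ i ∈ s, M i ∈ symplecticGroup l ℝ)
    (hMpd : ∀ i ∈ s, (M i).PosDef) (hsum : ∑ i ∈ s, M i = #s • 1) : ∀ i ∈ s, M i = 1 := by
  have hMs i (hi : i ∈ s) : (M i).IsSymm := isHermitian_iff_isSymm.mp (hMpd i hi).isHermitian
  have hzero : ∑ i ∈ s, (M i + (M i)⁻¹ - 2) = 0 := by
    rw [Finset.sum_sub_distrib, Finset.sum_add_distrib, hsum, sum_inv_eq_card_smul_one hM hMs hsum,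
      Finset.sum_const, ← smul_add, one_add_one_eq_two, sub_self]
  have hnonneg i (hi : i ∈ s) : 0 ≤ M i + (M i)⁻¹ - 2 :=
    (hMpd i hi).posSemidef_add_inv_sub_two.nonneg
  intro i hi
  refine (hMpd i hi).eq_one_of_add_inv_eq_two (sub_eq_zero.mp ?_)
  exact (Finset.sum_eq_zero_iff_of_nonneg hnonneg).mp hzero i hi

end SymplecticGroup

theorem isSymplectic_iff_mem_symplecticGroup {n : ℕ}
    {M : Matrix (Fin n ⊕ Fin n) (Fin n ⊕ Fin n) ℝ} :
    IsSymplectic M ↔ M ∈ symplecticGroup (Fin n) ℝ :=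
  SymplecticGroup.mem_iff'.symm

theorem posDef_symplectic_average_eq_one (n : ℕ)
    (M₁ M₂ M₃ M₄ : Matrix (Fin n ⊕ Fin n) (Fin n ⊕ Fin n) ℝ)
    (h₁ : M₁.PosDef) (h₂ : M₂.PosDef) (h₃ : M₃.PosDef) (h₄ : M₄.PosDef)
    (hs₁ : IsSymplectic M₁) (hs₂ : IsSymplectic M₂)
    (hs₃ : IsSymplectic M₃) (hs₄ : IsSymplectic M₄)
    (h : (1 / 4 : ℝ) • (M₁ + M₂ + M₃ + M₄) = 1) :
    M₁ = 1 ∧ M₂ = 1 ∧ M₃ = 1 ∧ M₄ = 1 := by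
  set M : Fin 4 → Matrix (Fin n ⊕ Fin n) (Fin n ⊕ Fin n) ℝ := ![M₁, M₂, M₃, M₄]
  have hsum : ∑ i, M i = #(univ : Finset (Fin 4)) • 1 := by
    calc ∑ i, M i = M₁ + M₂ + M₃ + M₄ := Fin.sum_univ_four M
      _ = (4 : ℝ) • (1 / 4 : ℝ) • (M₁ + M₂ + M₃ + M₄) := by norm_num [smul_smul]
      _ = #univ • 1 := by rw [h, card_univ, Fintype.card_fin, ← Nat.cast_smul_eq_nsmul ℝ]; norm_num
  have hM := SymplecticGroup.eq_one_of_posDef_of_sum_eq_card_smul_one (s := univ) (M := M)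
    (by simp [Fin.forall_fin_succ, M, ← isSymplectic_iff_mem_symplecticGroup, hs₁, hs₂, hs₃, hs₄])
    (by simp [Fin.forall_fin_succ, M, h₁, h₂, h₃, h₄]) hsum
  exact ⟨hM 0 (mem_univ _), hM 1 (mem_univ _), hM 2 (mem_univ _), hM 3 (mem_univ _)⟩
end
end

section
/- If L₁, L₂ ∈ Sp(2n,ℝ) and ½L₁ᵀL₁ ≥ ½L₂ᵀL₂ (in the positive semidefinite order), then L₁ᵀL₁ = L₂ᵀL₂. -/
/-
Symplectic matrices have determinant one, so `P₁ = L₁ᵀL₁` and `P₂ = L₂ᵀL₂` are positive definite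
of determinant one. Conjugating by `P₂^{-1/2}` turns `P₂ ≤ P₁` into `1 ≤ X` with `det X = 1`;
the eigenvalues of `X` are then at least one with product one, so they all equal one and `X = 1`.
-/

open Matrix
open scoped ComplexOrder

noncomputable section

open scoped MatrixOrder

namespace Matrix

variable {n 𝕜 : Type*} [Fintype n] [DecidableEq n] [RCLike 𝕜]

lemma IsHermitian.det_one_add {M : Matrix n n 𝕜} (hM : M.IsHermitian) :
    det (1 + M) = ∏ i, (1 + hM.eigenvalues i : 𝕜) := by
  set U := hM.eigenvectorUnitary
  conv_lhs => rw [hM.spectral_theorem, ← map_one (Unitary.conjStarAlgAut 𝕜 _ U), ← map_add,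
    Unitary.conjStarAlgAut_apply]
  rw [det_mul, det_mul, mul_right_comm, ← det_mul, Unitary.mul_star_self_of_mem U.2, det_one,
    one_mul, ← diagonal_one, diagonal_add, det_diagonal]
  rfl

lemma eq_one_of_one_le_of_det_eq_one {X : Matrix n n 𝕜} (h : 1 ≤ X) (hdet : X.det = 1) :
    X = 1 := by
  have hM : (X - 1).PosSemidef := le_iff.mp h
  have hprod : ∏ i, (1 + hM.1.eigenvalues i) = 1 := by
    have := hM.1.det_one_add
    rw [add_sub_cancel, hdet] at this
    exact_mod_cast this.symm
  have hzero : hM.1.eigenvalues = 0 := by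
    by_contra hne
    obtain ⟨i, hi⟩ := Function.ne_iff.mp hne
    have : ∏ _i : n, (1 : ℝ) < ∏ i, (1 + hM.1.eigenvalues i) :=
      Finset.prod_lt_prod (fun _ _ ↦ one_pos) (fun j _ ↦ by simp [hM.eigenvalues_nonneg j])
        ⟨i, Finset.mem_univ i, by simpa using (hM.eigenvalues_nonneg i).lt_of_ne' hi⟩
    simp [hprod] at this
  exact sub_eq_zero.mp (hM.1.eigenvalues_eq_zero_iff.mp hzero)

lemma eq_of_le_of_det_eq {A B : Matrix n n 𝕜} (hB : B.PosDef) (hBA : B ≤ A)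
    (hdet : A.det = B.det) : A = B := by
  set S := CFC.sqrt B
  have hSS : S * S = B := CFC.sqrt_mul_sqrt_self B hB.posSemidef.nonneg
  have hS : IsUnit S := (CFC.isUnit_sqrt_iff B hB.posSemidef.nonneg).mpr hB.isUnit
  have hSstar : star S = S := (CFC.sqrt_nonneg B).isSelfAdjoint
  set T := S⁻¹
  have hTstar : star T = T := by
    rw [star_eq_conjTranspose, conjTranspose_nonsing_inv, ← star_eq_conjTranspose, hSstar]
  have hTS : T * S = 1 := nonsing_inv_mul S ((isUnit_iff_isUnit_det S).mp hS)
  have hST : S * T = 1 := mul_nonsing_inv S ((isUnit_iff_isUnit_det S).mp hS)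
  have hT : star T * B * T = 1 := by
    rw [hTstar, ← hSS, ← mul_assoc, hTS, one_mul, hST]
  have h1 : 1 ≤ star T * A * T := hT ▸ star_left_conjugate_le_conjugate hBA T
  have h2 : (star T * A * T).det = 1 := by
    rw [← det_one (n := n), ← hT, det_mul, det_mul, hdet, ← det_mul, ← det_mul]
  calc A = S * (star T * A * T) * S := by
        rw [hTstar, ← mul_assoc, ← mul_assoc, hST, one_mul, mul_assoc, hTS, mul_one]
    _ = B := by rw [eq_one_of_one_le_of_det_eq_one h1 h2, mul_one, hSS]

end Matrix

lemma IsSymplectic.det_transpose_mul_self {n : ℕ} {L : Matrix (Fin n ⊕ Fin n) (Fin n ⊕ Fin n) ℝ}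
    (hL : IsSymplectic L) : (Lᵀ * L).det = 1 := by
  rw [det_mul, det_transpose, SymplecticGroup.det_eq_one (SymplecticGroup.mem_iff'.mpr hL),
    mul_one]

theorem comparable_extreme_points_eq (n : ℕ)
    (L₁ L₂ : Matrix (Fin n ⊕ Fin n) (Fin n ⊕ Fin n) ℝ)
    (h₁ : IsSymplectic L₁) (h₂ : IsSymplectic L₂)
    (h : ((1 / 2 : ℝ) • (L₁ᵀ * L₁) - (1 / 2 : ℝ) • (L₂ᵀ * L₂)).PosSemidef) :
    L₁ᵀ * L₁ = L₂ᵀ * L₂ := by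
  have hle : L₂ᵀ * L₂ ≤ L₁ᵀ * L₁ := by
    rw [le_iff]
    simpa [← smul_sub, smul_smul] using h.smul (show (0 : ℝ) ≤ 2 by norm_num)
  have hpos : (L₂ᵀ * L₂).PosDef := by
    have hpsd := posSemidef_conjTranspose_mul_self L₂
    rw [conjTranspose_eq_transpose_of_trivial] at hpsd
    exact hpsd.posDef_iff_det_ne_zero.mpr (by simp [h₂.det_transpose_mul_self])
  exact eq_of_le_of_det_eq hpos hle (by rw [h₁.det_transpose_mul_self, h₂.det_transpose_mul_self])
end
end

section
/- Suppose s₁ > s₂ > ... > s_n > 0 are real numbers linearly independent over ℚ, t₁,...,t_n > 0, and {∑ s_j k_j : k ∈ ℤ₊ⁿ} = {∑ t_j k_j : k ∈ ℤ₊ⁿ} as subsets of ℝ. Then there exists a permutation σ of {1,...,n} with t_j = s_{σ(j)} for all j. -/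
theorem spectrum_determines_parameters (n : ℕ) (s t : Fin n → ℝ)
    (hs_anti : ∀ i j : Fin n, i < j → s j < s i) (hs_pos : ∀ i, 0 < s i)
    (hs_indep : ∀ q : Fin n → ℚ, (∑ i, (q i : ℝ) * s i) = 0 → q = 0)
    (ht_pos : ∀ i, 0 < t i)
    (hspec : {x : ℝ | ∃ k : Fin n → ℕ, x = ∑ i, s i * (k i : ℝ)} =
             {x : ℝ | ∃ k : Fin n → ℕ, x = ∑ i, t i * (k i : ℝ)}) :
    ∃ σ : Equiv.Perm (Fin n), ∀ j, t j = s (σ j) := by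
  classical
  -- t j is in the t-spectrum, hence in the s-spectrum
  have hAex : ∀ j, ∃ a : Fin n → ℕ, t j = ∑ i, s i * (a i : ℝ) := by
    intro j
    have hmem : t j ∈ {x : ℝ | ∃ k : Fin n → ℕ, x = ∑ i, t i * (k i : ℝ)} := by
      refine ⟨fun i => if i = j then 1 else 0, ?_⟩
      simp [apply_ite]
    rw [← hspec] at hmem
    exact hmem
  choose A hA using hAex
  have hBex : ∀ j, ∃ b : Fin n → ℕ, s j = ∑ i, t i * (b i : ℝ) := by
    intro j
    have hmem : s j ∈ {x : ℝ | ∃ k : Fin n → ℕ, x = ∑ i, s i * (k i : ℝ)} := by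
      refine ⟨fun i => if i = j then 1 else 0, ?_⟩
      simp [apply_ite]
    rw [hspec] at hmem
    exact hmem
  choose B hB using hBex
  -- BA = 1 over ℕ
  have keyBA : ∀ j m, (∑ i, B j i * A i m) = if m = j then 1 else 0 := by
    intro j m
    have expand : ∑ m, ((∑ i, B j i * A i m : ℕ) : ℝ) * s m = s j := by
      have hti : ∀ i, (∑ m, (A i m : ℝ) * s m) = t i := by
        intro i
        rw [hA i]
        exact Finset.sum_congr rfl fun m _ => mul_comm _ _
      calc ∑ m, ((∑ i, B j i * A i m : ℕ) : ℝ) * s m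
          = ∑ m, ∑ i, (B j i : ℝ) * ((A i m : ℝ) * s m) := by
            push_cast
            refine Finset.sum_congr rfl fun m _ => ?_
            rw [Finset.sum_mul]
            exact Finset.sum_congr rfl fun i _ => by ring
        _ = ∑ i, ∑ m, (B j i : ℝ) * ((A i m : ℝ) * s m) := Finset.sum_comm
        _ = ∑ i, (B j i : ℝ) * t i := by
            refine Finset.sum_congr rfl fun i _ => ?_
            rw [← Finset.mul_sum, hti]
        _ = s j := by
            rw [hB j]
            exact Finset.sum_congr rfl fun i _ => mul_comm _ _
    have hq := hs_indep
      (fun m => ((∑ i, B j i * A i m : ℕ) : ℚ) - (if m = j then 1 else 0)) ?_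
    · have := congrFun hq m
      simp only [Pi.zero_apply, sub_eq_zero] at this
      exact_mod_cast this
    · calc ∑ m, ((((∑ i, B j i * A i m : ℕ) : ℚ) - (if m = j then 1 else 0) : ℚ) : ℝ) * s m
          = ∑ m, (((∑ i, B j i * A i m : ℕ) : ℝ) - (if m = j then 1 else 0)) * s m :=
            Finset.sum_congr rfl fun m _ => by
              congr 1
              push_cast
              by_cases h : m = j <;> simp [h]
        _ = (∑ m, ((∑ i, B j i * A i m : ℕ) : ℝ) * s m)
            - ∑ m, (if m = j then (1:ℝ) else 0) * s m := by
            rw [← Finset.sum_sub_distrib]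
            exact Finset.sum_congr rfl fun m _ => by ring
        _ = 0 := by
            rw [expand]
            simp
  -- cast matrices to ℚ and use mul_eq_one_comm
  set MA : Matrix (Fin n) (Fin n) ℚ := fun i m => (A i m : ℚ) with hMA
  set MB : Matrix (Fin n) (Fin n) ℚ := fun j i => (B j i : ℚ) with hMB
  have hBAmat : MB * MA = 1 := by
    ext j m
    rw [Matrix.mul_apply, Matrix.one_apply]
    have hc : ∑ i, MB j i * MA i m = ((∑ i, B j i * A i m : ℕ) : ℚ) := by
      push_cast
      rfl
    rw [hc, keyBA j m]
    by_cases h : j = m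
    · subst h; simp
    · rw [if_neg (fun hh : m = j => h hh.symm), if_neg h]
      simp
  have hABmat : MA * MB = 1 := mul_eq_one_comm.mp hBAmat
  have keyAB : ∀ j m, (∑ i, A j i * B i m) = if j = m then 1 else 0 := by
    intro j m
    have h1 : (MA * MB) j m = (1 : Matrix (Fin n) (Fin n) ℚ) j m := by rw [hABmat]
    rw [Matrix.mul_apply, Matrix.one_apply] at h1
    have hc : ∑ i, MA j i * MB i m = ((∑ i, A j i * B i m : ℕ) : ℚ) := by
      push_cast
      rfl
    rw [hc] at h1
    have h2 : ((∑ i, A j i * B i m : ℕ) : ℚ) = ((if j = m then 1 else 0 : ℕ) : ℚ) := by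
      rw [h1]
      by_cases h : j = m <;> simp [h]
    exact_mod_cast h2
  -- choose σ
  have hdiag : ∀ j, ∑ i, A j i * B i j = 1 := fun j => by simpa using keyAB j j
  have hσex : ∀ j, ∃ i, A j i * B i j ≠ 0 := by
    intro j
    obtain ⟨i, _, hi⟩ := Finset.exists_ne_zero_of_sum_ne_zero
      (s := Finset.univ) (f := fun i => A j i * B i j) (by rw [hdiag j]; exact one_ne_zero)
    exact ⟨i, hi⟩
  choose σ hσ using hσex
  have hAσ : ∀ j, A j (σ j) ≠ 0 := fun j => fun h => hσ j (by rw [h]; ring)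
  have hBσ : ∀ j, B (σ j) j ≠ 0 := fun j => fun h => hσ j (by rw [h]; ring)
  -- each off-diagonal entry of row j of A vanishes
  have hBrow : ∀ i, ∃ m, B i m ≠ 0 := by
    intro i
    have h1 : ∑ m, B i m * A m i = 1 := by
      have := keyBA i i
      simpa using this
    obtain ⟨m, _, hm⟩ := Finset.exists_ne_zero_of_sum_ne_zero
      (s := Finset.univ) (f := fun m => B i m * A m i) (by rw [h1]; exact one_ne_zero)
    exact ⟨m, fun h => hm (by rw [h]; ring)⟩
  have hArow : ∀ j i, i ≠ σ j → A j i = 0 := by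
    intro j i hne
    by_contra hAji
    obtain ⟨m, hBim⟩ := hBrow i
    by_cases hm : m = j
    · -- two distinct positive terms in a sum equal to 1
      subst hm
      have hsub : ({σ m, i} : Finset (Fin n)) ⊆ Finset.univ := Finset.subset_univ _
      have hle : ∑ k ∈ ({σ m, i} : Finset (Fin n)), A m k * B k m
          ≤ ∑ k, A m k * B k m := Finset.sum_le_sum_of_subset hsub
      rw [hdiag m, Finset.sum_pair (fun h => hne h.symm)] at hle
      have h1 : 1 ≤ A m (σ m) * B (σ m) m := Nat.one_le_iff_ne_zero.mpr (hσ m)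
      have h2 : 1 ≤ A m i * B i m :=
        Nat.one_le_iff_ne_zero.mpr (Nat.mul_ne_zero hAji hBim)
      omega
    · have h0 : ∑ k, A j k * B k m = 0 := by
        rw [keyAB j m, if_neg (fun h => hm h.symm)]
      have := (Finset.sum_eq_zero_iff.mp h0) i (Finset.mem_univ i)
      exact Nat.mul_ne_zero hAji hBim this
  -- A j (σ j) = 1
  have hAone : ∀ j, A j (σ j) = 1 := by
    intro j
    have hle : A j (σ j) * B (σ j) j ≤ ∑ k, A j k * B k j :=
      Finset.single_le_sum (f := fun k => A j k * B k j)
        (fun k _ => Nat.zero_le _) (Finset.mem_univ _)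
    rw [hdiag j] at hle
    have h1 : 1 ≤ A j (σ j) * B (σ j) j := Nat.one_le_iff_ne_zero.mpr (hσ j)
    have : A j (σ j) * B (σ j) j = 1 := le_antisymm hle h1
    exact Nat.eq_one_of_mul_eq_one_right this
  -- σ injective
  have hinj : Function.Injective σ := by
    intro j j' hjj'
    by_contra hne
    have h0 : ∑ k, A j k * B k j' = 0 := by
      rw [keyAB j j', if_neg hne]
    have := (Finset.sum_eq_zero_iff.mp h0) (σ j) (Finset.mem_univ _)
    have hB' : B (σ j) j' ≠ 0 := by rw [hjj']; exact hBσ j'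
    exact Nat.mul_ne_zero (hAσ j) hB' this
  refine ⟨Equiv.ofBijective σ (Finite.injective_iff_bijective.mp hinj), fun j => ?_⟩
  have : t j = ∑ i, s i * (A j i : ℝ) := hA j
  rw [this]
  rw [Finset.sum_eq_single (σ j)]
  · rw [hAone j]
    simp [Equiv.ofBijective_apply]
  · intro i _ hi
    rw [hArow j i hi]
    simp
  · intro h
    exact absurd (Finset.mem_univ _) h
end
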